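/- arXiv:1803.00123 — 2 statements merged into one kernel-verified Lean document; each statement's English description precedes it below -/
import Mathlib

section
/- Let √N·A be an N×N Hadamard matrix, and let N₁, N₂ be positive integers with N₁·N₂ < N; set n = N − N₂. Then any submatrix of A obtained by selecting n rows and N₁ columns has rank N₁. -/
/-!
If `Aᴴ * A = 1` and every entry of `A` has norm at most `b`, then for `f ≠ 0`
`‖f‖₂² = ‖A f‖₂² ≤ |supp (A f)| · ‖A f‖∞² ≤ |supp (A f)| · b² ‖f‖₁²
  ≤ b² |supp f| |supp (A f)| ‖f‖₂²`,
so `|supp f| · |supp (A f)| ≥ b⁻²`, which is `N` for a Hadamard matrix.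
Extending a kernel vector of the `n × N₁` submatrix by zero gives `f` with `|supp f| ≤ N₁`
and `A f` vanishing on the `n` selected rows, so `|supp (A f)| ≤ N - n = N₂`;
as `N₁ N₂ < N`, the kernel is trivial and the columns are independent.
-/

noncomputable def suppCard {n : ℕ} (f : Fin n → ℂ) : ℕ := (Function.support f).ncard

noncomputable def mu {n : ℕ} (A : Matrix (Fin n) (Fin n) ℂ) : ℕ :=
  sInf {m | ∃ f : Fin n → ℂ, f ≠ 0 ∧ m = suppCard f * suppCard (A.mulVec f)}

noncomputable def kron {N M : ℕ} [NeZero N] (A : Matrix (Fin N) (Fin N) ℂ)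
    (B : Matrix (Fin M) (Fin M) ℂ) : Matrix (Fin (N * M)) (Fin (N * M)) ℂ :=
  fun i j =>
    A ⟨i.val % N, Nat.mod_lt _ (Nat.pos_of_ne_zero (NeZero.ne N))⟩
      ⟨j.val % N, Nat.mod_lt _ (Nat.pos_of_ne_zero (NeZero.ne N))⟩ *
    B ⟨i.val / N, (Nat.div_lt_iff_lt_mul (Nat.pos_of_ne_zero (NeZero.ne N))).mpr
        (mul_comm N M ▸ i.isLt)⟩
      ⟨j.val / N, (Nat.div_lt_iff_lt_mul (Nat.pos_of_ne_zero (NeZero.ne N))).mpr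
        (mul_comm N M ▸ j.isLt)⟩

noncomputable def kronPow {N : ℕ} [NeZero N] (A : Matrix (Fin N) (Fin N) ℂ) :
    (p : ℕ) → Matrix (Fin (N ^ p)) (Fin (N ^ p)) ℂ
  | 0 => 1
  | p + 1 => Matrix.reindex (finCongr (by rw [pow_succ]; ring)) (finCongr (by rw [pow_succ]; ring))
      (kron A (kronPow A p))

open Finset Function Matrix

theorem ncard_support_eq_card_filter {ι Z : Type*} [Fintype ι] [Zero Z] (f : ι → Z)
    [DecidablePred (f · ≠ 0)] :
    (support f).ncard = #(univ.filter (f · ≠ 0)) := by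
  rw [← Set.ncard_coe_finset]; congr; ext; simp

theorem sum_comp_eq_sum_filter_ne_zero {ι Z M : Type*} [Fintype ι] [Zero Z] [AddCommMonoid M]
    (f : ι → Z) {g : Z → M} (hg : g 0 = 0) [DecidablePred (f · ≠ 0)] :
    ∑ i, g (f i) = ∑ i ∈ univ.filter (f · ≠ 0), g (f i) :=
  (sum_subset (subset_univ _) fun i _ hi => by simp_all).symm

section Uncertainty

variable {𝕜 E ι : Type*} [RCLike 𝕜] [NormedAddCommGroup E] [Fintype ι]

theorem star_dotProduct_self_eq_sum_norm_sq (v : ι → 𝕜) :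
    star v ⬝ᵥ v = ((∑ i, ‖v i‖ ^ 2 : ℝ) : 𝕜) := by
  simp [dotProduct, RCLike.conj_mul]

theorem sum_norm_sq_mulVec_of_conjTranspose_mul_self_eq_one {m : Type*} [Fintype m]
    [DecidableEq ι] {A : Matrix m ι 𝕜} (hA : Aᴴ * A = 1) (f : ι → 𝕜) :
    ∑ i, ‖(A *ᵥ f) i‖ ^ 2 = ∑ j, ‖f j‖ ^ 2 := by
  have h : star (A *ᵥ f) ⬝ᵥ (A *ᵥ f) = star f ⬝ᵥ f := by
    rw [star_mulVec, dotProduct_mulVec, vecMul_vecMul, hA, vecMul_one]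
  rw [star_dotProduct_self_eq_sum_norm_sq, star_dotProduct_self_eq_sum_norm_sq] at h
  exact_mod_cast h

theorem sq_sum_norm_le_ncard_support_mul_sum_norm_sq (f : ι → E) :
    (∑ i, ‖f i‖) ^ 2 ≤ (support f).ncard * ∑ i, ‖f i‖ ^ 2 := by
  classical
  rw [sum_comp_eq_sum_filter_ne_zero f norm_zero,
    sum_comp_eq_sum_filter_ne_zero f (g := (‖·‖ ^ 2)) (by simp), ncard_support_eq_card_filter]
  exact sq_sum_le_card_mul_sum_sq

theorem sum_norm_sq_le_ncard_support_mul {f : ι → E} {B : ℝ} (hB : ∀ i, ‖f i‖ ≤ B) :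
    ∑ i, ‖f i‖ ^ 2 ≤ (support f).ncard * B ^ 2 := by
  classical
  calc ∑ i, ‖f i‖ ^ 2 = ∑ i ∈ univ.filter (f · ≠ 0), ‖f i‖ ^ 2 :=
        sum_comp_eq_sum_filter_ne_zero f (g := (‖·‖ ^ 2)) (by simp)
    _ ≤ ∑ i ∈ univ.filter (f · ≠ 0), B ^ 2 :=
        sum_le_sum fun i _ => pow_le_pow_left₀ (norm_nonneg _) (hB i) 2
    _ = (support f).ncard * B ^ 2 := by rw [sum_const, nsmul_eq_mul, ncard_support_eq_card_filter]

theorem norm_mulVec_apply_le {m : Type*} {A : Matrix m ι 𝕜} {b : ℝ} (hb : ∀ i j, ‖A i j‖ ≤ b)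
    (f : ι → 𝕜) (i : m) : ‖(A *ᵥ f) i‖ ≤ b * ∑ j, ‖f j‖ :=
  calc ‖(A *ᵥ f) i‖ ≤ ∑ j, ‖A i j * f j‖ := norm_sum_le _ _
    _ ≤ ∑ j, b * ‖f j‖ := sum_le_sum fun j _ => by
        rw [norm_mul]; exact mul_le_mul_of_nonneg_right (hb i j) (norm_nonneg _)
    _ = b * ∑ j, ‖f j‖ := (mul_sum ..).symm

theorem one_le_sq_mul_ncard_support_mul_ncard_support_mulVec {m : Type*} [Fintype m]
    [DecidableEq ι] {A : Matrix m ι 𝕜} (hA : Aᴴ * A = 1) {b : ℝ} (hb : ∀ i j, ‖A i j‖ ≤ b)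
    {f : ι → 𝕜} (hf : f ≠ 0) :
    1 ≤ b ^ 2 * (support f).ncard * (support (A *ᵥ f)).ncard := by
  set E := ∑ j, ‖f j‖ ^ 2
  have hE : 0 < E := by
    obtain ⟨j, hj⟩ := Function.ne_iff.mp hf
    exact (pow_pos (norm_pos_iff.mpr hj) 2).trans_le
      (single_le_sum (f := fun j => ‖f j‖ ^ 2) (fun j _ => by positivity) (mem_univ j))
  refine le_of_mul_le_mul_left ?_ hE
  calc E * 1 = ∑ i, ‖(A *ᵥ f) i‖ ^ 2 := by
        rw [mul_one, sum_norm_sq_mulVec_of_conjTranspose_mul_self_eq_one hA]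
    _ ≤ (support (A *ᵥ f)).ncard * (b * ∑ j, ‖f j‖) ^ 2 :=
        sum_norm_sq_le_ncard_support_mul (norm_mulVec_apply_le hb f)
    _ = b ^ 2 * (support (A *ᵥ f)).ncard * (∑ j, ‖f j‖) ^ 2 := by ring
    _ ≤ b ^ 2 * (support (A *ᵥ f)).ncard * ((support f).ncard * E) := by
        gcongr; exact sq_sum_norm_le_ncard_support_mul_sum_norm_sq f
    _ = E * (b ^ 2 * (support f).ncard * (support (A *ᵥ f)).ncard) := by ring

end Uncertainty

section Submatrix

variable {m n m' n' : Type*}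

theorem mulVec_extend_zero_comp {R : Type*} [NonUnitalNonAssocSemiring R] [Fintype n] [Fintype n']
    (A : Matrix m n R) (r : m' → m) {c : n' → n} (hc : Injective c)
    (g : n' → R) : (A *ᵥ extend c g 0) ∘ r = A.submatrix r c *ᵥ g := by
  ext a
  refine (Fintype.sum_of_injective c hc _ _ (fun j hj => ?_) fun k => ?_).symm
  · rw [extend_apply' _ _ _ hj, Pi.zero_apply, mul_zero]
  · rw [hc.extend_apply]; rfl

theorem ncard_support_extend_zero_le {M : Type*} [Zero M] [Fintype n'] {c : n' → n} (g : n' → M) :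
    (support (extend c g 0)).ncard ≤ Fintype.card n' :=
  calc (support (extend c g 0)).ncard ≤ (c '' support g).ncard :=
        Set.ncard_le_ncard support_extend_zero_subset
    _ ≤ (support g).ncard := Set.ncard_image_le (Set.toFinite _)
    _ ≤ Fintype.card n' := by
        rw [← Nat.card_eq_fintype_card]; exact Set.ncard_le_card _

theorem rank_submatrix_eq_card_of_le_ncard_support_mul {K : Type*} [Field K] [Fintype m]
    [Fintype n] [Fintype m'] [Fintype n'] {A : Matrix m n K} {k : ℕ}
    (hA : ∀ f : n → K, f ≠ 0 → k ≤ (support f).ncard * (support (A *ᵥ f)).ncard)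
    {r : m' → m} (hr : Injective r) {c : n' → n} (hc : Injective c)
    (h : Fintype.card n' * (Fintype.card m - Fintype.card m') < k) :
    (A.submatrix r c).rank = Fintype.card n' := by
  suffices hinj : Injective (A.submatrix r c).mulVecLin by
    rw [rank, LinearMap.finrank_range_of_inj hinj, Module.finrank_fintype_fun_eq_card]
  rw [← LinearMap.ker_eq_bot, LinearMap.ker_eq_bot']
  intro g hg
  by_contra hg0
  set f := extend c g 0
  have hf : f ≠ 0 := fun hf => hg0 <| funext fun a => by
    simpa [f, hc.extend_apply] using congrFun hf (c a)
  have hAf : support (A *ᵥ f) ⊆ (Set.range r)ᶜ := by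
    rintro _ hi ⟨a, rfl⟩
    exact hi (congrFun ((mulVec_extend_zero_comp A r hc g).trans hg) a)
  have hAf_card : (support (A *ᵥ f)).ncard ≤ Fintype.card m - Fintype.card m' := by
    calc (support (A *ᵥ f)).ncard ≤ (Set.range r)ᶜ.ncard := Set.ncard_le_ncard hAf
      _ = Fintype.card m - Fintype.card m' := by
        rw [Set.ncard_compl, Set.ncard_range_of_injective hr, Nat.card_eq_fintype_card,
          Nat.card_eq_fintype_card]
  have hk := (hA f hf).trans (Nat.mul_le_mul (ncard_support_extend_zero_le g) hAf_card)
  omega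

end Submatrix

theorem le_suppCard_mul_suppCard_mulVec_of_hadamard {N : ℕ} {A : Matrix (Fin N) (Fin N) ℂ}
    (hA : A ∈ unitaryGroup (Fin N) ℂ) (hHad : ∀ i j, ‖(Real.sqrt N : ℂ) * A i j‖ = 1)
    {f : Fin N → ℂ} (hf : f ≠ 0) : N ≤ suppCard f * suppCard (A *ᵥ f) := by
  have hb i j : ‖A i j‖ ≤ (Real.sqrt N)⁻¹ := by
    specialize hHad i j
    rw [norm_mul, Complex.norm_real, Real.norm_of_nonneg (Real.sqrt_nonneg _)] at hHad
    exact (eq_inv_of_mul_eq_one_right hHad).le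
  have key := one_le_sq_mul_ncard_support_mul_ncard_support_mulVec
    (mem_unitaryGroup_iff'.mp hA) hb hf
  rw [inv_pow, Real.sq_sqrt (Nat.cast_nonneg _), mul_assoc] at key
  suffices (N : ℝ) ≤ suppCard f * suppCard (A *ᵥ f) by exact_mod_cast this
  calc (N : ℝ) ≤ N * ((N : ℝ)⁻¹ * (suppCard f * suppCard (A *ᵥ f))) :=
        le_mul_of_one_le_right (Nat.cast_nonneg _) key
    _ = N * (N : ℝ)⁻¹ * (suppCard f * suppCard (A *ᵥ f)) := by ring
    _ ≤ suppCard f * suppCard (A *ᵥ f) :=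
        mul_le_of_le_one_left (by positivity) mul_inv_le_one

theorem stmt_15_general {N : ℕ} (A : Matrix (Fin N) (Fin N) ℂ)
    (hA : A ∈ Matrix.unitaryGroup (Fin N) ℂ)
    (hHad : ∀ i j, ‖(Real.sqrt N : ℂ) * A i j‖ = 1)
    (N₁ N₂ : ℕ) (h : N₁ * N₂ < N)
    (r : Fin (N - N₂) → Fin N) (hr : Function.Injective r)
    (c : Fin N₁ → Fin N) (hc : Function.Injective c) :
    (A.submatrix r c).rank = N₁ := by
  have hcodim : N₁ * (N - (N - N₂)) < N := (Nat.mul_le_mul_left _ (by omega)).trans_lt h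
  simpa using rank_submatrix_eq_card_of_le_ncard_support_mul
    (fun f hf => le_suppCard_mul_suppCard_mulVec_of_hadamard hA hHad hf) hr hc
    (by simpa using hcodim)

/-- Any `(N - N₂) × N₁` submatrix of a scaled Hadamard matrix with
`N₁ N₂ < N` has full rank `N₁`. -/
theorem stmt_15 {N : ℕ} (A : Matrix (Fin N) (Fin N) ℂ)
    (hA : A ∈ Matrix.unitaryGroup (Fin N) ℂ)
    (hHad : ∀ i j, ‖(Real.sqrt N : ℂ) * A i j‖ = 1)
    (N₁ N₂ : ℕ) (hN₁ : 0 < N₁) (hN₂ : 0 < N₂) (h : N₁ * N₂ < N)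
    (r : Fin (N - N₂) → Fin N) (hr : Function.Injective r)
    (c : Fin N₁ → Fin N) (hc : Function.Injective c) :
    (A.submatrix r c).rank = N₁ :=
  stmt_15_general A hA hHad N₁ N₂ h r hr c hc
end

section
/- Let A be an n×n unitary matrix with real entries, M := max_{i,j}|A_{ij}|, and μ(A) := min_{f≠0}|supp(f)|·|supp(Af)|. Then 1/M² ≤ μ(A) ≤ n. -/
/-! For `g = A *ᵥ f`, every entry satisfies `‖g i‖ ≤ M ∑_{j ∈ supp f} ‖f j‖`, so by Cauchy–Schwarz
`‖g i‖² ≤ M² |supp f| ‖f‖₂²`. Summing over `supp g` and using `‖g‖₂ = ‖f‖₂` (unitarity) gives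
`‖f‖₂² ≤ M² |supp f| |supp g| ‖f‖₂²`, i.e. `|supp f| |supp g| ≥ 1 / M²`. -/

open Matrix Finset

theorem Matrix.norm_mulVec_apply_le_mul_sum {ι R : Type*} [Fintype ι] [SeminormedRing R]
    {A : Matrix ι ι R} {M : ℝ} (hM : ∀ i j, ‖A i j‖ ≤ M) {f : ι → R} {s : Finset ι}
    (hs : ∀ j ∉ s, f j = 0) (i : ι) :
    ‖(A *ᵥ f) i‖ ≤ M * ∑ j ∈ s, ‖f j‖ :=
  calc ‖(A *ᵥ f) i‖ = ‖∑ j ∈ s, A i j * f j‖ := by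
        rw [mulVec, dotProduct, ← sum_subset (subset_univ s) (fun j _ hj => by simp [hs j hj])]
    _ ≤ ∑ j ∈ s, ‖A i j‖ * ‖f j‖ := norm_sum_le_of_le s fun j _ => norm_mul_le _ _
    _ ≤ M * ∑ j ∈ s, ‖f j‖ := by
        rw [mul_sum]
        exact sum_le_sum fun j _ => mul_le_mul_of_nonneg_right (hM i j) (norm_nonneg _)

section Unitary

variable {ι 𝕜 : Type*} [Fintype ι] [DecidableEq ι] [RCLike 𝕜] {A : Matrix ι ι 𝕜}

theorem Matrix.sum_norm_sq_mulVec_of_mem_unitaryGroup (hA : A ∈ unitaryGroup ι 𝕜)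
    (f : ι → 𝕜) : ∑ i, ‖(A *ᵥ f) i‖ ^ 2 = ∑ i, ‖f i‖ ^ 2 := by
  have hdot (v : ι → 𝕜) : star v ⬝ᵥ v = ((∑ i, ‖v i‖ ^ 2 : ℝ) : 𝕜) := by
    simp [dotProduct, RCLike.conj_mul]
  have hAf : star (A *ᵥ f) ⬝ᵥ (A *ᵥ f) = star f ⬝ᵥ f := by
    rw [star_mulVec, dotProduct_mulVec, vecMul_vecMul, ← star_eq_conjTranspose,
      Unitary.star_mul_self_of_mem hA, vecMul_one]
  exact_mod_cast (hdot _).symm.trans (hAf.trans (hdot f))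

theorem Matrix.one_le_sq_mul_card_mul_card_of_mem_unitaryGroup (hA : A ∈ unitaryGroup ι 𝕜)
    {M : ℝ} (hM : ∀ i j, ‖A i j‖ ≤ M) {f : ι → 𝕜} (hf : f ≠ 0) {s t : Finset ι}
    (hs : ∀ j ∉ s, f j = 0) (ht : ∀ i ∉ t, (A *ᵥ f) i = 0) :
    1 ≤ M ^ 2 * (#s * #t) := by
  have hS : 0 < ∑ i, ‖f i‖ ^ 2 := by
    obtain ⟨j, hj⟩ := Function.ne_iff.mp hf
    exact (pow_pos (norm_pos_iff.mpr hj) 2).trans_le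
      (single_le_sum (f := fun i => ‖f i‖ ^ 2) (fun i _ => by positivity) (mem_univ j))
  have hrow := norm_mulVec_apply_le_mul_sum hM hs
  suffices ∑ i, ‖f i‖ ^ 2 ≤ M ^ 2 * (#s * #t) * ∑ i, ‖f i‖ ^ 2 by nlinarith
  calc ∑ i, ‖f i‖ ^ 2 = ∑ i ∈ t, ‖(A *ᵥ f) i‖ ^ 2 := by
        rw [← sum_norm_sq_mulVec_of_mem_unitaryGroup hA f,
          sum_subset (subset_univ t) (fun i _ hi => by simp [ht i hi])]
    _ ≤ #t * (M * ∑ j ∈ s, ‖f j‖) ^ 2 := by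
        rw [← nsmul_eq_mul]
        exact sum_le_card_nsmul _ _ _ fun i _ => pow_le_pow_left₀ (norm_nonneg _) (hrow i) 2
    _ = #t * M ^ 2 * (∑ j ∈ s, ‖f j‖) ^ 2 := by ring
    _ ≤ #t * M ^ 2 * (#s * ∑ j ∈ s, ‖f j‖ ^ 2) := by gcongr; exact sq_sum_le_card_mul_sum_sq
    _ = M ^ 2 * (#s * #t) * ∑ i, ‖f i‖ ^ 2 := by
        rw [sum_subset (subset_univ s) (fun j _ hj => by simp [hs j hj])]; ring

end Unitary

section Mu

variable {n : ℕ}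

theorem suppCard_le (f : Fin n → ℂ) : suppCard f ≤ n := by
  rw [suppCard]
  simpa using Set.ncard_le_ncard (Set.subset_univ (Function.support f))

theorem suppCard_single (i : Fin n) : suppCard (Pi.single i (1 : ℂ)) = 1 := by
  rw [suppCard, Pi.support_single_of_ne one_ne_zero, Set.ncard_singleton]

theorem one_le_sq_mul_suppCard_mul_suppCard {A : Matrix (Fin n) (Fin n) ℂ}
    (hA : A ∈ unitaryGroup (Fin n) ℂ) {M : ℝ} (hM : ∀ i j, ‖A i j‖ ≤ M) {f : Fin n → ℂ}
    (hf : f ≠ 0) : 1 ≤ M ^ 2 * (suppCard f * suppCard (A *ᵥ f)) := by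
  have hsupp (v : Fin n → ℂ) : ∀ j ∉ (Set.toFinite (Function.support v)).toFinset, v j = 0 :=
    fun j hj => by simpa using hj
  rw [suppCard, suppCard, Set.ncard_eq_toFinset_card _ (Set.toFinite _),
    Set.ncard_eq_toFinset_card _ (Set.toFinite _)]
  exact one_le_sq_mul_card_mul_card_of_mem_unitaryGroup hA hM hf (hsupp f) (hsupp _)

theorem mu_le_suppCard_mul (A : Matrix (Fin n) (Fin n) ℂ) {f : Fin n → ℂ} (hf : f ≠ 0) :
    mu A ≤ suppCard f * suppCard (A *ᵥ f) :=
  Nat.sInf_le ⟨f, hf, rfl⟩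

theorem exists_mu_eq (hn : 0 < n) (A : Matrix (Fin n) (Fin n) ℂ) :
    ∃ f : Fin n → ℂ, f ≠ 0 ∧ mu A = suppCard f * suppCard (A *ᵥ f) :=
  Nat.sInf_mem (s := {m | ∃ f : Fin n → ℂ, f ≠ 0 ∧ m = suppCard f * suppCard (A *ᵥ f)})
    ⟨_, Pi.single ⟨0, hn⟩ 1, by simp, rfl⟩

theorem mu_le_card (A : Matrix (Fin n) (Fin n) ℂ) : mu A ≤ n := by
  rcases Nat.eq_zero_or_pos n with rfl | hn
  · refine (Nat.sInf_eq_zero.mpr (Or.inr (Set.eq_empty_of_forall_notMem ?_))).le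
    rintro _ ⟨f, hf, -⟩
    exact hf (Subsingleton.elim f 0)
  calc mu A ≤ suppCard (Pi.single ⟨0, hn⟩ (1 : ℂ)) * suppCard (A *ᵥ Pi.single ⟨0, hn⟩ 1) :=
        mu_le_suppCard_mul A (by simp)
    _ ≤ n := by rw [suppCard_single, one_mul]; exact suppCard_le _

end Mu

theorem stmt_18_general {n : ℕ} (A : Matrix (Fin n) (Fin n) ℂ)
    (hA : A ∈ Matrix.unitaryGroup (Fin n) ℂ) (M : ℝ)
    (hM : IsGreatest (Set.range fun q : Fin n × Fin n => ‖A q.1 q.2‖) M) :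
    1 / M ^ 2 ≤ (mu A : ℝ) ∧ mu A ≤ n := by
  obtain ⟨⟨i, -⟩, -⟩ := hM.1
  obtain ⟨f, hf, hmu⟩ := exists_mu_eq i.pos A
  have hbound := one_le_sq_mul_suppCard_mul_suppCard hA (fun a b => hM.2 ⟨(a, b), rfl⟩) hf
  refine ⟨div_le_of_le_mul₀ (sq_nonneg M) (Nat.cast_nonneg _) ?_, mu_le_card A⟩
  rw [hmu, mul_comm]
  exact_mod_cast hbound

/-- For a real unitary (orthogonal) matrix, `1/M² ≤ μ(A) ≤ n`. -/
theorem stmt_18 {n : ℕ} (hn : 0 < n) (A : Matrix (Fin n) (Fin n) ℂ)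
    (hA : A ∈ Matrix.unitaryGroup (Fin n) ℂ)
    (hreal : ∀ i j, (A i j).im = 0) (M : ℝ)
    (hM : IsGreatest (Set.range fun q : Fin n × Fin n => ‖A q.1 q.2‖) M) :
    1 / M ^ 2 ≤ (mu A : ℝ) ∧ mu A ≤ n :=
  stmt_18_general A hA M hM
end
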